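/- If F : ℂ → ℂ is C¹ and Lagrangian, i.e. Im[(1+|ξ|²)² ∂(F/(1+|ξ|²)²)] = 0 at every ξ ∈ ℂ, then there exists a real-valued function r : ℂ → ℝ (a support function) such that F = ½(1+|ξ|²)² ∂̄r on all of ℂ. -/

import Mathlib

open Complex

/-- Wirtinger derivative `∂f(ξ) = ½(Df(ξ)[1] − i·Df(ξ)[i])`, with `Df` the real Fréchet
derivative. -/
noncomputable def wD (f : ℂ → ℂ) (ξ : ℂ) : ℂ :=
  (1 / 2 : ℂ) * (fderiv ℝ f ξ 1 - Complex.I * fderiv ℝ f ξ Complex.I)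

/-- Wirtinger derivative `∂̄f(ξ) = ½(Df(ξ)[1] + i·Df(ξ)[i])`, with `Df` the real Fréchet
derivative. -/
noncomputable def wDbar (f : ℂ → ℂ) (ξ : ℂ) : ℂ :=
  (1 / 2 : ℂ) * (fderiv ℝ f ξ 1 + Complex.I * fderiv ℝ f ξ Complex.I)

/-- The spherical Laplacian in the stereographic coordinate: `Δf(ξ) = (1+|ξ|²)² ∂∂̄f(ξ)`. -/
noncomputable def sphLap (f : ℂ → ℂ) (ξ : ℂ) : ℂ :=
  (1 + (normSq ξ : ℂ)) ^ 2 * wD (wDbar f) ξ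

/-!
Put `G = F / (1 + |ξ|²)²`. The Lagrangian condition says `Im ∂G = 0`, which is exactly the
symmetry of the real Jacobian of `G` seen as a vector field on `ℝ²`. By the Poincaré lemma on the
(convex) plane, `G` is then the gradient of a real function `r₀`, and since `∂̄r = ½ ∇r` for
real `r`, the function `r = 4 r₀` satisfies `½ (1 + |ξ|²)² ∂̄r = (1 + |ξ|²)² G = F`.
-/

open InnerProductSpace

theorem HasGradientAt.const_mul {E : Type*} [NormedAddCommGroup E] [InnerProductSpace ℝ E]
    [CompleteSpace E] {f : E → ℝ} {f' x : E} (c : ℝ) (h : HasGradientAt f f' x) :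
    HasGradientAt (fun y => c * f y) (c • f') x := by
  rw [hasGradientAt_iff_hasFDerivAt, map_smul]
  exact h.hasFDerivAt.const_mul c

theorem Convex.exists_forall_hasGradientAt_of_isSymmetric_fderiv {E : Type*}
    [NormedAddCommGroup E] [InnerProductSpace ℝ E] [CompleteSpace E] {s : Set E} {g : E → E}
    (hs : Convex ℝ s) (hso : IsOpen s) (hg : DifferentiableOn ℝ g s)
    (hsymm : ∀ x ∈ s, (fderiv ℝ g x : E →ₗ[ℝ] E).IsSymmetric) :
    ∃ r : E → ℝ, ∀ x ∈ s, HasGradientAt r (g x) x := by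
  have hω : ∀ x ∈ s, HasFDerivAt (fun y => innerSL ℝ (g y))
      ((innerSL ℝ).comp (fderiv ℝ g x)) x := fun x hx =>
    (innerSL ℝ).hasFDerivAt.comp x ((hg x hx).differentiableAt (hso.mem_nhds hx)).hasFDerivAt
  exact hs.exists_forall_hasFDerivAt_of_fderiv_symmetric (ω := fun y => innerSL ℝ (g y)) hso
    (fun x hx => (hω x hx).differentiableAt.differentiableWithinAt)
    (fun x hx u v => by
      rw [(hω x hx).fderiv]
      exact (hsymm x hx u v).trans (real_inner_comm _ _))

namespace Complex

theorem clm_apply_eq_re_smul_add_im_smul (L : ℂ →L[ℝ] ℂ) (u : ℂ) :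
    L u = u.re • L 1 + u.im • L I := by
  have hu : u = u.re • (1 : ℂ) + u.im • I := Complex.ext (by simp) (by simp)
  conv_lhs => rw [hu]
  rw [map_add, map_smul, map_smul]

theorem isSymmetric_of_im_apply_one_eq_re_apply_I (L : ℂ →L[ℝ] ℂ)
    (h : (L 1).im = (L I).re) : (L : ℂ →ₗ[ℝ] ℂ).IsSymmetric := by
  intro u v
  change ⟪L u, v⟫_ℝ = ⟪u, L v⟫_ℝ
  rw [Complex.inner, Complex.inner, clm_apply_eq_re_smul_add_im_smul L u,
    clm_apply_eq_re_smul_add_im_smul L v]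
  simp only [real_smul, map_add, map_mul, conj_ofReal, mul_re, mul_im, add_re, add_im, ofReal_re,
    ofReal_im, conj_re, conj_im]
  linear_combination (u.re * v.im - u.im * v.re) * h

end Complex

theorem im_wD_eq_zero_iff (f : ℂ → ℂ) (ξ : ℂ) :
    (wD f ξ).im = 0 ↔ (fderiv ℝ f ξ 1).im = (fderiv ℝ f ξ I).re := by
  simp [wD, sub_eq_zero]

theorem HasGradientAt.wDbar_ofReal_eq {r : ℂ → ℝ} {g ξ : ℂ} (h : HasGradientAt r g ξ) :
    wDbar (fun w => (r w : ℂ)) ξ = g / 2 := by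
  have hc : HasFDerivAt (fun w => (r w : ℂ)) (ofRealCLM.comp (toDual ℝ ℂ g : ℂ →L[ℝ] ℝ)) ξ :=
    ofRealCLM.hasFDerivAt.comp ξ h
  rw [wDbar, hc.fderiv]
  apply Complex.ext <;> simp [toDual_apply_apply, Complex.inner, div_eq_inv_mul]

theorem one_add_normSq_ne_zero (w : ℂ) : 1 + (normSq w : ℂ) ≠ 0 := by
  exact_mod_cast (add_pos_of_pos_of_nonneg one_pos (normSq_nonneg w)).ne'

/-- If `F : ℂ → ℂ` is `C¹` and Lagrangian, i.e. `Im[(1+|ξ|²)² ∂(F/(1+|ξ|²)²)] = 0`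
everywhere, then there exists a real-valued support function `r : ℂ → ℝ` with
`F = ½(1+|ξ|²)² ∂̄r` on all of `ℂ`. -/
theorem stmt6 (F : ℂ → ℂ) (hF : ContDiff ℝ 1 F)
    (hLag : ∀ ξ : ℂ,
      ((1 + (normSq ξ : ℂ)) ^ 2 * wD (fun w => F w / (1 + (normSq w : ℂ)) ^ 2) ξ).im = 0) :
    ∃ r : ℂ → ℝ, ∀ ξ : ℂ,
      F ξ = (1 / 2) * (1 + (normSq ξ : ℂ)) ^ 2 * wDbar (fun w => (r w : ℂ)) ξ := by
  set G : ℂ → ℂ := fun w => F w / (1 + (normSq w : ℂ)) ^ 2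
  have hG : Differentiable ℝ G := by
    have hN : Differentiable ℝ fun w : ℂ => (normSq w : ℂ) := by
      simp_rw [← mul_conj]
      fun_prop
    have hF' := hF.differentiable one_ne_zero
    simp only [G, div_eq_mul_inv]
    fun_prop (disch := exact fun w => pow_ne_zero 2 (one_add_normSq_ne_zero w))
  have hclosed (ξ : ℂ) : (fderiv ℝ G ξ : ℂ →ₗ[ℝ] ℂ).IsSymmetric := by
    have hLagξ := hLag ξ
    norm_cast at hLagξ
    rw [im_ofReal_mul, mul_eq_zero] at hLagξ
    have hIm : (wD G ξ).im = 0 :=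
      hLagξ.resolve_left (pow_ne_zero 2 (by exact_mod_cast one_add_normSq_ne_zero ξ))
    exact isSymmetric_of_im_apply_one_eq_re_apply_I _ ((im_wD_eq_zero_iff G ξ).1 hIm)
  obtain ⟨r, hr⟩ := convex_univ.exists_forall_hasGradientAt_of_isSymmetric_fderiv isOpen_univ
    hG.differentiableOn fun ξ _ => hclosed ξ
  refine ⟨fun w => 4 * r w, fun ξ => ?_⟩
  rw [((hr ξ trivial).const_mul 4).wDbar_ofReal_eq, real_smul]
  simp only [G]
  field_simp [one_add_normSq_ne_zero ξ]
  push_cast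
  ring
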